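/- arXiv:1306.0259 — 2 statements merged into one kernel-verified Lean document; each statement's English description precedes it below -/
import Mathlib

section
/- Suppose f : Δ = [a,b] × [c,d] → ℝ is convex on the co-ordinates and integrable, and define H(t,s) = (1/((b-a)(d-c))) ∫_a^b ∫_c^d f(tx + (1-t)(a+b)/2, sy + (1-s)(c+d)/2) dx dy. Then sup over (t,s) ∈ [0,1]² of H(t,s) equals H(1,1) = (1/((b-a)(d-c))) ∫_a^b ∫_c^d f(x,y) dx dy and inf over (t,s) ∈ [0,1]² of H(t,s) equals H(0,0) = f((a+b)/2, (c+d)/2). -/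
/-! For `g` convex on `[a, b]` with midpoint `m`, reflecting in `m` gives the left Hermite–Hadamard
inequality `(b - a) g(m) ≤ ∫ g`, and integrating `g(t x + (1 - t) m) ≤ t g(x) + (1 - t) g(m)`
together with it gives `(b - a) g(m) ≤ ∫ g(t x + (1 - t) m) ≤ ∫ g`. The map
`x ↦ t x + (1 - t) m` is the homothety with centre `m` and ratio `t`. Since convexity in `u` of
`f (u, y)` survives integration in `y`, the one-variable bounds apply first in `y` for fixed `x`
and then in `x` to the convex function `u ↦ ∫ f (u, s y + (1 - s) n) dy`. -/

open MeasureTheory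

def CoordConvexOn (a b c d : ℝ) (f : ℝ → ℝ → ℝ) : Prop :=
  (∀ y ∈ Set.Icc c d, ConvexOn ℝ (Set.Icc a b) (fun x => f x y)) ∧
  (∀ x ∈ Set.Icc a b, ConvexOn ℝ (Set.Icc c d) (fun y => f x y))

/-- The Dragomir mapping `H` associated to `f` on `[a,b] × [c,d]`. -/
noncomputable def Hmap (a b c d : ℝ) (f : ℝ → ℝ → ℝ) (t s : ℝ) : ℝ :=
  (1 / ((b - a) * (d - c))) *
    ∫ x in a..b, ∫ y in c..d,
      f (t * x + (1 - t) * (a + b) / 2) (s * y + (1 - s) * (c + d) / 2)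

open Set AffineMap

lemma homothety_apply_eq_mul_add (m t x : ℝ) : homothety m t x = t * x + (1 - t) * m := by
  simp only [homothety_apply, vsub_eq_sub, smul_eq_mul, vadd_eq_add]
  ring

lemma homothety_midpoint_mem_Icc {a b t x : ℝ} (ht : t ∈ Icc (0 : ℝ) 1) (hx : x ∈ Icc a b) :
    homothety ((a + b) / 2) t x ∈ Icc a b := by
  obtain ⟨ht₀, ht₁⟩ := ht
  obtain ⟨hxa, hxb⟩ := hx
  rw [homothety_apply_eq_mul_add]
  constructor <;> nlinarith

namespace ConvexOn

variable {a b t : ℝ} {g : ℝ → ℝ}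

lemma two_mul_le_add_reflect (hg : ConvexOn ℝ (Icc a b) g) {x : ℝ} (hx : x ∈ Icc a b) :
    2 * g ((a + b) / 2) ≤ g x + g (a + b - x) := by
  have hx' : a + b - x ∈ Icc a b := ⟨by linarith [hx.2], by linarith [hx.1]⟩
  have h := hg.2 hx hx' (by norm_num) (by norm_num) (add_halves (1 : ℝ))
  simp only [smul_eq_mul] at h
  rw [show 1 / 2 * x + 1 / 2 * (a + b - x) = (a + b) / 2 by ring] at h
  linarith

/-- `g` is bounded above by `max (g a) (g b)`, below by reflection in the midpoint, and is
continuous on `(a, b)`. -/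
lemma intervalIntegrable (hab : a ≤ b) (hg : ConvexOn ℝ (Icc a b) g) :
    IntervalIntegrable g volume a b := by
  have hmax : ∀ x ∈ Icc a b, g x ≤ max (g a) (g b) :=
    fun x hx ↦ hg.le_max_of_mem_Icc (left_mem_Icc.2 hab) (right_mem_Icc.2 hab) hx
  have hbound : ∀ x ∈ Ioo a b,
      ‖g x‖ ≤ max |2 * g ((a + b) / 2) - max (g a) (g b)| |max (g a) (g b)| := by
    intro x hx
    have hx' := Ioo_subset_Icc_self hx
    have hrefl : a + b - x ∈ Icc a b := ⟨by linarith [hx'.2], by linarith [hx'.1]⟩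
    exact abs_le_max_abs_abs
      (by linarith [hg.two_mul_le_add_reflect hx', hmax _ hrefl]) (hmax x hx')
  have hcont : ContinuousOn g (Ioo a b) := by
    simpa only [interior_Icc] using hg.continuousOn_interior
  rw [intervalIntegrable_iff_integrableOn_Ioo_of_le hab]
  exact .of_bound measure_Ioo_lt_top (hcont.aestronglyMeasurable measurableSet_Ioo) _
    (ae_restrict_of_forall_mem measurableSet_Ioo hbound)

lemma comp_homothety (hg : ConvexOn ℝ (Icc a b) g) (ht : t ∈ Icc (0 : ℝ) 1) :
    ConvexOn ℝ (Icc a b) (g ∘ homothety ((a + b) / 2) t) :=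
  (hg.comp_affineMap _).subset (fun _ hx ↦ homothety_midpoint_mem_Icc ht hx) (convex_Icc a b)

lemma mul_le_intervalIntegral (hab : a ≤ b) (hg : ConvexOn ℝ (Icc a b) g) :
    (b - a) * g ((a + b) / 2) ≤ ∫ x in a..b, g x := by
  have hint := hg.intervalIntegrable hab
  have hint_refl : IntervalIntegrable (fun x ↦ g (a + b - x)) volume a b := by
    simpa using (hint.comp_sub_left (a + b)).symm
  have hrefl : ∫ x in a..b, g (a + b - x) = ∫ x in a..b, g x := by
    simp [intervalIntegral.integral_comp_sub_left]
  have h := intervalIntegral.integral_mono_on hab intervalIntegrable_const (hint.add hint_refl)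
    fun x hx ↦ hg.two_mul_le_add_reflect hx
  rw [intervalIntegral.integral_const, intervalIntegral.integral_add hint hint_refl, hrefl,
    smul_eq_mul] at h
  linarith

lemma mul_le_intervalIntegral_comp_homothety (hab : a ≤ b) (hg : ConvexOn ℝ (Icc a b) g)
    (ht : t ∈ Icc (0 : ℝ) 1) :
    (b - a) * g ((a + b) / 2) ≤ ∫ x in a..b, g (homothety ((a + b) / 2) t x) := by
  simpa [homothety_apply_same] using (hg.comp_homothety ht).mul_le_intervalIntegral hab

lemma intervalIntegral_comp_homothety_le (hab : a ≤ b) (hg : ConvexOn ℝ (Icc a b) g)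
    (ht : t ∈ Icc (0 : ℝ) 1) :
    ∫ x in a..b, g (homothety ((a + b) / 2) t x) ≤ ∫ x in a..b, g x := by
  have hm : (a + b) / 2 ∈ Icc a b := ⟨by linarith, by linarith⟩
  have hint := hg.intervalIntegrable hab
  have hle : ∀ x ∈ Icc a b,
      g (homothety ((a + b) / 2) t x) ≤ t * g x + (1 - t) * g ((a + b) / 2) := fun x hx ↦ by
    simpa [homothety_apply_eq_mul_add] using
      hg.2 hx hm ht.1 (sub_nonneg.2 ht.2) (add_sub_cancel t 1)
  calc ∫ x in a..b, g (homothety ((a + b) / 2) t x)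
      ≤ ∫ x in a..b, (t * g x + (1 - t) * g ((a + b) / 2)) :=
        intervalIntegral.integral_mono_on hab ((hg.comp_homothety ht).intervalIntegrable hab)
          ((hint.const_mul t).add intervalIntegrable_const) hle
    _ = t * (∫ x in a..b, g x) + (1 - t) * ((b - a) * g ((a + b) / 2)) := by
        rw [intervalIntegral.integral_add (hint.const_mul t) intervalIntegrable_const,
          intervalIntegral.integral_const_mul, intervalIntegral.integral_const, smul_eq_mul]
        ring
    _ ≤ ∫ x in a..b, g x := by
        have := mul_le_mul_of_nonneg_left (hg.mul_le_intervalIntegral hab) (sub_nonneg.2 ht.2)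
        linear_combination this

end ConvexOn

namespace CoordConvexOn

variable {a b c d : ℝ} {f : ℝ → ℝ → ℝ}

lemma convexOn_intervalIntegral (hcd : c ≤ d) (hf : CoordConvexOn a b c d f) {s : ℝ}
    (hs : s ∈ Icc (0 : ℝ) 1) :
    ConvexOn ℝ (Icc a b) (fun u ↦ ∫ y in c..d, f u (homothety ((c + d) / 2) s y)) := by
  simp only [intervalIntegral.integral_of_le hcd]
  refine integral_convexOn_of_integrand_ae (convex_Icc a b)
    (ae_restrict_of_forall_mem measurableSet_Ioc fun y hy ↦ ?_) fun u hu ↦ ?_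
  · exact hf.1 _ (homothety_midpoint_mem_Icc hs (Ioc_subset_Icc_self hy))
  · exact (((hf.2 u hu).comp_homothety hs).intervalIntegrable hcd).1

lemma mul_mul_le_integral_comp_homothety (hab : a ≤ b) (hcd : c ≤ d)
    (hf : CoordConvexOn a b c d f) {t s : ℝ} (ht : t ∈ Icc (0 : ℝ) 1) (hs : s ∈ Icc (0 : ℝ) 1) :
    (b - a) * (d - c) * f ((a + b) / 2) ((c + d) / 2) ≤
      ∫ x in a..b, ∫ y in c..d,
        f (homothety ((a + b) / 2) t x) (homothety ((c + d) / 2) s y) := by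
  have hm : (a + b) / 2 ∈ Icc a b := ⟨by linarith, by linarith⟩
  calc (b - a) * (d - c) * f ((a + b) / 2) ((c + d) / 2)
      = (b - a) * ((d - c) * f ((a + b) / 2) ((c + d) / 2)) := mul_assoc _ _ _
    _ ≤ (b - a) * ∫ y in c..d, f ((a + b) / 2) (homothety ((c + d) / 2) s y) :=
        mul_le_mul_of_nonneg_left
          ((hf.2 _ hm).mul_le_intervalIntegral_comp_homothety hcd hs) (sub_nonneg.2 hab)
    _ ≤ _ := (hf.convexOn_intervalIntegral hcd hs).mul_le_intervalIntegral_comp_homothety hab ht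

lemma integral_comp_homothety_le (hab : a ≤ b) (hcd : c ≤ d)
    (hf : CoordConvexOn a b c d f) {t s : ℝ} (ht : t ∈ Icc (0 : ℝ) 1) (hs : s ∈ Icc (0 : ℝ) 1) :
    ∫ x in a..b, ∫ y in c..d,
        f (homothety ((a + b) / 2) t x) (homothety ((c + d) / 2) s y) ≤
      ∫ x in a..b, ∫ y in c..d, f x y := by
  have hG := hf.convexOn_intervalIntegral hcd hs
  have hG₁ := hf.convexOn_intervalIntegral hcd (right_mem_Icc.2 zero_le_one)
  simp only [homothety_one, AffineMap.id_apply] at hG₁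
  calc _ ≤ ∫ x in a..b, ∫ y in c..d, f x (homothety ((c + d) / 2) s y) :=
        hG.intervalIntegral_comp_homothety_le hab ht
    _ ≤ _ := intervalIntegral.integral_mono_on hab (hG.intervalIntegrable hab)
        (hG₁.intervalIntegrable hab)
        fun x hx ↦ (hf.2 x hx).intervalIntegral_comp_homothety_le hcd hs

end CoordConvexOn

lemma Hmap_eq (a b c d : ℝ) (f : ℝ → ℝ → ℝ) (t s : ℝ) :
    Hmap a b c d f t s = (1 / ((b - a) * (d - c))) *
      ∫ x in a..b, ∫ y in c..d,
        f (homothety ((a + b) / 2) t x) (homothety ((c + d) / 2) s y) := by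
  simp only [Hmap, homothety_apply_eq_mul_add, mul_div_assoc]

theorem stmt14_general (a b c d : ℝ) (hab : a < b) (hcd : c < d) (f : ℝ → ℝ → ℝ)
    (hf : CoordConvexOn a b c d f) :
    (∀ t ∈ Set.Icc (0:ℝ) 1, ∀ s ∈ Set.Icc (0:ℝ) 1,
        Hmap a b c d f t s ≤ Hmap a b c d f 1 1) ∧
    Hmap a b c d f 1 1 = (1 / ((b - a) * (d - c))) * (∫ x in a..b, ∫ y in c..d, f x y) ∧
    (∀ t ∈ Set.Icc (0:ℝ) 1, ∀ s ∈ Set.Icc (0:ℝ) 1,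
        Hmap a b c d f 0 0 ≤ Hmap a b c d f t s) ∧
    Hmap a b c d f 0 0 = f ((a + b) / 2) ((c + d) / 2) := by
  have harea : 0 < (b - a) * (d - c) := mul_pos (sub_pos.2 hab) (sub_pos.2 hcd)
  have hH₁₁ : Hmap a b c d f 1 1 =
      1 / ((b - a) * (d - c)) * ∫ x in a..b, ∫ y in c..d, f x y := by
    simp [Hmap_eq]
  have hH₀₀ : Hmap a b c d f 0 0 = f ((a + b) / 2) ((c + d) / 2) := by
    simp only [Hmap_eq, homothety_zero, AffineMap.const_apply, intervalIntegral.integral_const,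
      smul_eq_mul]
    rw [← mul_assoc (b - a), one_div_mul_eq_div, mul_div_cancel_left₀ _ harea.ne']
  refine ⟨fun t ht s hs ↦ ?_, hH₁₁, fun t ht s hs ↦ ?_, hH₀₀⟩
  · rw [Hmap_eq, hH₁₁]
    exact mul_le_mul_of_nonneg_left (hf.integral_comp_homothety_le hab.le hcd.le ht hs)
      (one_div_pos.2 harea).le
  · rw [hH₀₀, Hmap_eq, one_div_mul_eq_div, le_div_iff₀ harea, mul_comm]
    exact hf.mul_mul_le_integral_comp_homothety hab.le hcd.le ht hs

theorem stmt14 (a b c d : ℝ) (hab : a < b) (hcd : c < d) (f : ℝ → ℝ → ℝ)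
    (hf : CoordConvexOn a b c d f)
    (hint : IntegrableOn (fun q : ℝ × ℝ => f q.1 q.2) (Set.Icc a b ×ˢ Set.Icc c d)) :
    (∀ t ∈ Set.Icc (0:ℝ) 1, ∀ s ∈ Set.Icc (0:ℝ) 1,
        Hmap a b c d f t s ≤ Hmap a b c d f 1 1) ∧
    Hmap a b c d f 1 1 = (1 / ((b - a) * (d - c))) * (∫ x in a..b, ∫ y in c..d, f x y) ∧
    (∀ t ∈ Set.Icc (0:ℝ) 1, ∀ s ∈ Set.Icc (0:ℝ) 1,
        Hmap a b c d f 0 0 ≤ Hmap a b c d f t s) ∧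
    Hmap a b c d f 0 0 = f ((a + b) / 2) ((c + d) / 2) :=
  stmt14_general a b c d hab hcd f hf
end

section
/- Suppose f : Δ = [a,b] × [c,d] → ℝ is convex on the co-ordinates and integrable, and define H(t,s) = (1/((b-a)(d-c))) ∫_a^b ∫_c^d f(tx + (1-t)(a+b)/2, sy + (1-s)(c+d)/2) dx dy. Then H is monotonically nondecreasing on the co-ordinates on [0,1]²: for fixed s, t ↦ H(t,s) is nondecreasing, and for fixed t, s ↦ H(t,s) is nondecreasing. -/
open MeasureTheory

/-!
For `t ∈ [-1, 1]` the homothety `x ↦ t x + (1 - t)(a + b)/2` maps `[a, b]` into itself, so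
`φ(t) = ∫_a^b g(t x + (1 - t)(a + b)/2) dx` is an integral of functions convex in `t`, hence convex
on `[-1, 1]`; the reflection `x ↦ a + b - x` shows that `φ` is even. An even convex function is
nondecreasing on `[0, 1]`. Applying this to `f` in each variable separately (after integrating out
the other one, which preserves convexity) gives both monotonicity statements. All integrals involved
exist because a convex function on a compact interval is bounded and continuous in the interior.
-/

open Set

theorem ConvexOn.comp_mul_add {s t : Set ℝ} {g : ℝ → ℝ} (hg : ConvexOn ℝ s g) (ht : Convex ℝ t)
    (p q : ℝ) (hmaps : MapsTo (fun x => p * x + q) t s) :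
    ConvexOn ℝ t (fun x => g (p * x + q)) := by
  have hline : ∀ x, AffineMap.lineMap q (p + q) x = p * x + q := fun x => by
    simp only [AffineMap.lineMap_apply, vadd_eq_add, vsub_eq_sub, smul_eq_mul]; ring
  simpa only [Function.comp_def, hline] using
    (hg.comp_affineMap (AffineMap.lineMap q (p + q))).subset
      (fun x hx => by simpa only [mem_preimage, hline] using hmaps hx) ht

theorem ConvexOn.integrableOn_Icc {a b : ℝ} {g : ℝ → ℝ} (hg : ConvexOn ℝ (Icc a b) g) :
    IntegrableOn g (Icc a b) := by
  have hupper : ∀ u ∈ Icc a b, g u ≤ max (g a) (g b) := fun u hu =>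
    hg.le_max_of_mem_Icc (left_mem_Icc.2 (hu.1.trans hu.2)) (right_mem_Icc.2 (hu.1.trans hu.2)) hu
  -- `(a + b)/2` is the midpoint of `u` and its reflection `a + b - u`
  have hlower : ∀ u ∈ Icc a b, 2 * g ((a + b) / 2) - max (g a) (g b) ≤ g u := by
    intro u hu
    have hu' : a + b - u ∈ Icc a b := ⟨by linarith [hu.2], by linarith [hu.1]⟩
    have hmid := hg.2 hu hu' (by norm_num : (0 : ℝ) ≤ 1 / 2) (by norm_num : (0 : ℝ) ≤ 1 / 2)
      (by norm_num)
    have hcomb : (1 / 2 : ℝ) • u + (1 / 2 : ℝ) • (a + b - u) = (a + b) / 2 := by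
      simp only [smul_eq_mul]; ring
    rw [hcomb, smul_eq_mul, smul_eq_mul] at hmid
    linarith [hupper _ hu']
  have hmeas : AEStronglyMeasurable g (volume.restrict (Icc a b)) := by
    rw [Measure.restrict_congr_set Ioo_ae_eq_Icc.symm]
    have hcont := hg.continuousOn_interior
    rw [interior_Icc] at hcont
    exact hcont.aestronglyMeasurable measurableSet_Ioo
  refine IntegrableOn.of_bound measure_Icc_lt_top hmeas
    (max |2 * g ((a + b) / 2) - max (g a) (g b)| |max (g a) (g b)|) ?_
  filter_upwards [ae_restrict_mem measurableSet_Icc] with u hu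
  exact abs_le_max_abs_abs (hlower u hu) (hupper u hu)

theorem ConvexOn.intervalIntegrable_s15 {a b : ℝ} (hab : a ≤ b) {g : ℝ → ℝ}
    (hg : ConvexOn ℝ (Icc a b) g) : IntervalIntegrable g volume a b :=
  (intervalIntegrable_iff_integrableOn_Icc_of_le hab).2 hg.integrableOn_Icc

theorem intervalIntegral_convexOn {a b : ℝ} (hab : a ≤ b) {E : Type*} [AddCommMonoid E]
    [Module ℝ E] {F : ℝ → E → ℝ} {s : Set E} (hs : Convex ℝ s)
    (hconv : ∀ x ∈ Icc a b, ConvexOn ℝ s (F x))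
    (hint : ∀ u ∈ s, IntervalIntegrable (F · u) volume a b) :
    ConvexOn ℝ s (fun u => ∫ x in a..b, F x u) := by
  simp_rw [intervalIntegral.integral_of_le hab]
  exact integral_convexOn_of_integrand_ae hs
    (ae_restrict_of_forall_mem measurableSet_Ioc fun x hx => hconv x (Ioc_subset_Icc_self hx))
    fun u hu => (hint u hu).1

theorem ConvexOn.monotoneOn_of_even {r : ℝ} {φ : ℝ → ℝ} (hφ : ConvexOn ℝ (Icc (-r) r) φ)
    (heven : ∀ t, φ (-t) = φ t) : MonotoneOn φ (Icc 0 r) := by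
  intro t₁ ht₁ t₂ ht₂ h12
  have hmax := hφ.le_max_of_mem_Icc (x := -t₂) (y := t₂)
    ⟨by linarith [ht₂.2], by linarith [ht₂.1, ht₂.2]⟩
    ⟨by linarith [ht₂.1, ht₂.2], ht₂.2⟩ ⟨by linarith [ht₁.1, ht₂.1], h12⟩
  rwa [heven, max_self] at hmax

theorem homothety_mem_Icc {a b t x : ℝ} (ht : t ∈ Icc (-1 : ℝ) 1) (hx : x ∈ Icc a b) :
    t * x + (1 - t) * (a + b) / 2 ∈ Icc a b := by
  obtain ⟨ht₀, ht₁⟩ := ht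
  obtain ⟨hx₀, hx₁⟩ := hx
  constructor <;> nlinarith

theorem integral_comp_homothety_even {a b : ℝ} (g : ℝ → ℝ) (t : ℝ) :
    ∫ x in a..b, g (-t * x + (1 - -t) * (a + b) / 2) =
      ∫ x in a..b, g (t * x + (1 - t) * (a + b) / 2) := by
  have hreflect := intervalIntegral.integral_comp_sub_left (a := a) (b := b)
    (fun x => g (t * x + (1 - t) * (a + b) / 2)) (a + b)
  rw [add_sub_cancel_right, add_sub_cancel_left] at hreflect
  rw [← hreflect]
  congr 1 with x
  ring_nf

theorem ConvexOn.monotoneOn_integral_comp_homothety {a b : ℝ} (hab : a ≤ b) {g : ℝ → ℝ}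
    (hg : ConvexOn ℝ (Icc a b) g) :
    MonotoneOn (fun t => ∫ x in a..b, g (t * x + (1 - t) * (a + b) / 2)) (Icc 0 1) := by
  refine ConvexOn.monotoneOn_of_even ?_ (integral_comp_homothety_even g)
  refine intervalIntegral_convexOn hab (convex_Icc _ _) (fun x hx => ?_) fun t ht => ?_
  · have hline : ∀ t, t * x + (1 - t) * (a + b) / 2 = (x - (a + b) / 2) * t + (a + b) / 2 :=
      fun t => by ring
    simp only [hline]
    exact hg.comp_mul_add (convex_Icc _ _) _ _ fun t ht => by
      simpa only [hline] using homothety_mem_Icc ht hx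
  · exact (hg.comp_mul_add (convex_Icc a b) _ _ fun _ hx => homothety_mem_Icc ht hx
      ).intervalIntegrable_s15 hab

theorem CoordConvexOn.convexOn_integral_snd {a b c d : ℝ} {f : ℝ → ℝ → ℝ}
    (hf : CoordConvexOn a b c d f) (hcd : c ≤ d) {s : ℝ} (hs : s ∈ Icc (-1 : ℝ) 1) :
    ConvexOn ℝ (Icc a b) (fun u => ∫ y in c..d, f u (s * y + (1 - s) * (c + d) / 2)) :=
  intervalIntegral_convexOn hcd (convex_Icc a b) (fun _ hy => hf.1 _ (homothety_mem_Icc hs hy))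
    fun u hu => ((hf.2 u hu).comp_mul_add (convex_Icc c d) _ _
      fun _ hy => homothety_mem_Icc hs hy).intervalIntegrable_s15 hcd

theorem stmt15_general (a b c d : ℝ) (hab : a < b) (hcd : c < d) (f : ℝ → ℝ → ℝ)
    (hf : CoordConvexOn a b c d f) :
    (∀ s ∈ Set.Icc (0:ℝ) 1, ∀ t₁ ∈ Set.Icc (0:ℝ) 1, ∀ t₂ ∈ Set.Icc (0:ℝ) 1,
        t₁ ≤ t₂ → Hmap a b c d f t₁ s ≤ Hmap a b c d f t₂ s) ∧
    (∀ t ∈ Set.Icc (0:ℝ) 1, ∀ s₁ ∈ Set.Icc (0:ℝ) 1, ∀ s₂ ∈ Set.Icc (0:ℝ) 1,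
        s₁ ≤ s₂ → Hmap a b c d f t s₁ ≤ Hmap a b c d f t s₂) := by
  have hnormalize : (0 : ℝ) ≤ 1 / ((b - a) * (d - c)) := by
    have := mul_pos (sub_pos.2 hab) (sub_pos.2 hcd)
    positivity
  have hunit : Icc (0 : ℝ) 1 ⊆ Icc (-1) 1 := Icc_subset_Icc_left (by norm_num)
  refine ⟨fun s hs t₁ ht₁ t₂ ht₂ h12 => ?_, fun t ht s₁ hs₁ s₂ hs₂ h12 => ?_⟩
  · exact mul_le_mul_of_nonneg_left ((hf.convexOn_integral_snd hcd.le (hunit hs)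
      ).monotoneOn_integral_comp_homothety hab.le ht₁ ht₂ h12) hnormalize
  · have hint : ∀ s ∈ Icc (0 : ℝ) 1, IntervalIntegrable (fun x => ∫ y in c..d,
        f (t * x + (1 - t) * (a + b) / 2) (s * y + (1 - s) * (c + d) / 2)) volume a b :=
      fun s hs => ((hf.convexOn_integral_snd hcd.le (hunit hs)).comp_mul_add (convex_Icc a b) _ _
        fun _ hx => homothety_mem_Icc (hunit ht) hx).intervalIntegrable_s15 hab.le
    refine mul_le_mul_of_nonneg_left (intervalIntegral.integral_mono_on hab.le (hint s₁ hs₁)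
      (hint s₂ hs₂) fun x hx => ?_) hnormalize
    exact (hf.2 _ (homothety_mem_Icc (hunit ht) hx)).monotoneOn_integral_comp_homothety hcd.le
      hs₁ hs₂ h12

theorem stmt15 (a b c d : ℝ) (hab : a < b) (hcd : c < d) (f : ℝ → ℝ → ℝ)
    (hf : CoordConvexOn a b c d f)
    (hint : IntegrableOn (fun q : ℝ × ℝ => f q.1 q.2) (Set.Icc a b ×ˢ Set.Icc c d)) :
    (∀ s ∈ Set.Icc (0:ℝ) 1, ∀ t₁ ∈ Set.Icc (0:ℝ) 1, ∀ t₂ ∈ Set.Icc (0:ℝ) 1,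
        t₁ ≤ t₂ → Hmap a b c d f t₁ s ≤ Hmap a b c d f t₂ s) ∧
    (∀ t ∈ Set.Icc (0:ℝ) 1, ∀ s₁ ∈ Set.Icc (0:ℝ) 1, ∀ s₂ ∈ Set.Icc (0:ℝ) 1,
        s₁ ≤ s₂ → Hmap a b c d f t s₁ ≤ Hmap a b c d f t s₂) :=
  stmt15_general a b c d hab hcd f hf
end
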